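/- (Theorem 1, Item 1, exponent of strong polynomial tractability for Λ^all, eigenvalue-counting form.) Let b be a prime, α, β > 1 reals, let 0 < γ_j^{(1)} ≤ 1 and 0 < γ_j^{(2)} ≤ 1 for all j, and assume s_γ < ∞. Then inf{τ ≥ 0 : there exists C ≥ 0 with N(ε,s,t) ≤ C ε^{-τ} for all ε ∈ (0,1) and all s,t ∈ ℕ} = 2·max(s_γ, 1/α, 1/β). -/

import Mathlib

open scoped BigOperators

/-- The Walsh-space decay function ρ_{α,γ} : ℕ → ℝ,
    ρ_{α,γ}(0) = 1 and ρ_{α,γ}(k) = γ·b^{-α·⌊log_b k⌋} for k ≥ 1. -/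
noncomputable def rho (b : ℕ) (α γ : ℝ) (k : ℕ) : ℝ :=
  if k = 0 then 1 else γ * (b : ℝ) ^ (-(α * (Nat.log b k : ℝ)))

/-- The Korobov-space decay function r_{β,γ} : ℤ → ℝ,
    r_{β,γ}(0) = 1 and r_{β,γ}(l) = γ·|l|^{-β} for l ≠ 0. -/
noncomputable def rK (β γ : ℝ) (l : ℤ) : ℝ :=
  if l = 0 then 1 else γ * |(l : ℝ)| ^ (-β)

/-- N(ε,s,t): the number of pairs (k,l) ∈ ℕ^s × ℤ^t with
    ρ_{α,γ^{(1)}}(k)·r_{β,γ^{(2)}}(l) > ε²; this equals the information complexity of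
    L₂-approximation in the hybrid Walsh–Korobov space for the class Λ^all. -/
noncomputable def Ncount (b : ℕ) (α β : ℝ) (γ1 γ2 : ℕ → ℝ) (ε : ℝ) (s t : ℕ) : ℕ :=
  {p : (Fin s → ℕ) × (Fin t → ℤ) |
    (∏ j : Fin s, rho b α (γ1 j) (p.1 j)) * (∏ j : Fin t, rK β (γ2 j) (p.2 j)) > ε ^ 2}.ncard

/-- The sum exponent s_γ = inf{κ > 0 : ∑_j (γ_j^{(1)})^κ < ∞ and ∑_j (γ_j^{(2)})^κ < ∞},
    with inf ∅ = ∞ (an element of ℝ≥0∞). -/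
noncomputable def sGamma (γ1 γ2 : ℕ → ℝ) : ENNReal :=
  sInf {x : ENNReal | ∃ κ : ℝ, 0 < κ ∧ x = ENNReal.ofReal κ ∧
    Summable (fun j => γ1 j ^ κ) ∧ Summable (fun j => γ2 j ^ κ)}


section work
variable {X : Type}
end work


variable {b : ℕ} {α β γ p : ℝ}

lemma rho_zero : rho b α γ 0 = 1 := by simp [rho]

lemma rho_one (hb : 1 < b) : rho b α γ 1 = γ := by
  simp [rho, Nat.log_one_right]

lemma rho_pos (hb : 1 < b) (hγ : 0 < γ) (k : ℕ) : 0 < rho b α γ k := by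
  unfold rho; split
  · norm_num
  · have hbR : (0:ℝ) < b := by positivity
    positivity

lemma rho_le_one (hb : 1 < b) (hγ0 : 0 < γ) (hγ1 : γ ≤ 1) (hα : 0 < α) (k : ℕ) :
    rho b α γ k ≤ 1 := by
  unfold rho; split
  · exact le_refl 1
  · have hbR : (1:ℝ) ≤ b := by exact_mod_cast hb.le
    have h1 : (b:ℝ) ^ (-(α * (Nat.log b k : ℝ))) ≤ 1 :=
      Real.rpow_le_one_of_one_le_of_nonpos hbR (by
        have : (0:ℝ) ≤ α * (Nat.log b k : ℝ) := by positivity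
        linarith)
    nlinarith

lemma rK_zero : rK β γ 0 = 1 := by simp [rK]

lemma rK_one : rK β γ 1 = γ := by simp [rK]

lemma rK_pos (hγ : 0 < γ) (l : ℤ) : 0 < rK β γ l := by
  unfold rK; split
  · norm_num
  · have : (0:ℝ) < |(l:ℝ)| := by
      simp only [abs_pos]
      exact_mod_cast ‹¬ l = 0›
    positivity

lemma rK_le_one (hγ0 : 0 < γ) (hγ1 : γ ≤ 1) (hβ : 0 < β) (l : ℤ) : rK β γ l ≤ 1 := by
  unfold rK; split
  · exact le_refl 1
  · have hl : (1:ℝ) ≤ |(l:ℝ)| := by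
      have : l ≠ 0 := ‹¬ l = 0›
      have : (1:ℤ) ≤ |l| := Int.one_le_abs (by omega)
      calc (1:ℝ) ≤ ((|l| : ℤ) : ℝ) := by exact_mod_cast this
        _ = |(l:ℝ)| := by push_cast; ring
    have h1 : |(l:ℝ)| ^ (-β) ≤ 1 :=
      Real.rpow_le_one_of_one_le_of_nonpos hl (by linarith)
    nlinarith

def Eset (b : ℕ) (α β : ℝ) (γ1 γ2 : ℕ → ℝ) (ε : ℝ) (s t : ℕ) :
    Set ((Fin s → ℕ) × (Fin t → ℤ)) :=
  {p | (∏ j : Fin s, rho b α (γ1 j) (p.1 j)) * (∏ j : Fin t, rK β (γ2 j) (p.2 j)) > ε ^ 2}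

lemma prod_le_factor {n : ℕ} (f : Fin n → ℝ) (h0 : ∀ j, 0 ≤ f j) (h1 : ∀ j, f j ≤ 1)
    (j : Fin n) : ∏ i, f i ≤ f j := by
  rw [← Finset.mul_prod_erase Finset.univ f (Finset.mem_univ j)]
  have h2 : ∏ i ∈ Finset.univ.erase j, f i ≤ 1 :=
    Finset.prod_le_one (fun i _ => h0 i) (fun i _ => h1 i)
  have h3 : 0 ≤ ∏ i ∈ Finset.univ.erase j, f i := Finset.prod_nonneg (fun i _ => h0 i)
  nlinarith [h0 j]

lemma rho_set_finite (b : ℕ) (hb : 1 < b) (α γ : ℝ) (hα : 0 < α) (hγ1 : γ ≤ 1)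
    (c : ℝ) (hc : 0 < c) : {k : ℕ | c < rho b α γ k}.Finite := by
  have hbR : (1:ℝ) < b := by exact_mod_cast hb
  have hr0 : (0:ℝ) ≤ (b:ℝ) ^ (-α) := Real.rpow_nonneg (by positivity) _
  have hr1 : (b:ℝ) ^ (-α) < 1 := Real.rpow_lt_one_of_one_lt_of_neg hbR (by linarith)
  obtain ⟨M, hM⟩ := exists_pow_lt_of_lt_one hc hr1
  apply Set.Finite.subset (Set.finite_Iio (b ^ M))
  intro k hk
  simp only [Set.mem_setOf_eq] at hk
  simp only [Set.mem_Iio]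
  by_contra hge
  push_neg at hge
  have hk0 : k ≠ 0 := by
    have : 1 ≤ b ^ M := Nat.one_le_pow _ _ (by omega)
    omega
  have hlog : M ≤ Nat.log b k := (Nat.le_log_iff_pow_le hb hk0).mpr hge
  have : rho b α γ k ≤ ((b:ℝ) ^ (-α)) ^ M := by
    rw [rho, if_neg hk0]
    have e1 : ((b:ℝ) ^ (-α)) ^ M = (b:ℝ) ^ (-(α * (M:ℝ))) := by
      rw [← Real.rpow_natCast ((b:ℝ) ^ (-α)) M, ← Real.rpow_mul (by positivity)]
      ring_nf
    rw [e1]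
    have e2 : (b:ℝ) ^ (-(α * (Nat.log b k : ℝ))) ≤ (b:ℝ) ^ (-(α * (M:ℝ))) := by
      apply Real.rpow_le_rpow_of_exponent_le hbR.le
      have : (M:ℝ) ≤ (Nat.log b k : ℝ) := by exact_mod_cast hlog
      nlinarith
    calc γ * (b:ℝ) ^ (-(α * (Nat.log b k : ℝ)))
        ≤ 1 * (b:ℝ) ^ (-(α * (Nat.log b k : ℝ))) := by
          apply mul_le_mul_of_nonneg_right hγ1 (Real.rpow_nonneg (by positivity) _)
      _ = (b:ℝ) ^ (-(α * (Nat.log b k : ℝ))) := one_mul _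
      _ ≤ _ := e2
  linarith

lemma rK_set_finite (β γ : ℝ) (hβ : 0 < β) (hγ1 : γ ≤ 1) (c : ℝ) (hc : 0 < c) :
    {l : ℤ | c < rK β γ l}.Finite := by
  obtain ⟨n, hn⟩ := exists_nat_gt (c ^ (-(1/β)))
  apply Set.Finite.subset (Set.finite_Icc (-(n:ℤ)) n)
  intro l hl
  simp only [Set.mem_setOf_eq] at hl
  simp only [Set.mem_Icc]
  by_contra habs
  have hla : (n:ℤ) < |l| := by
    rcases abs_cases l with ⟨h1, _⟩ | ⟨h1, _⟩ <;> omega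
  have hl0 : l ≠ 0 := by
    have : 0 ≤ (n:ℤ) := Int.ofNat_nonneg n
    omega
  have hlaR : (n:ℝ) < |(l:ℝ)| := by
    have := hla
    calc (n:ℝ) < ((|l| : ℤ) : ℝ) := by exact_mod_cast this
      _ = |(l:ℝ)| := by push_cast; ring
  have hcn : c ^ (-(1/β)) < |(l:ℝ)| := lt_trans hn hlaR
  -- then |l| ^ (-β) < c
  have hpos : (0:ℝ) < c ^ (-(1/β)) := Real.rpow_pos_of_pos hc _
  have h2 : |(l:ℝ)| ^ (-β) < (c ^ (-(1/β))) ^ (-β) := by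
    apply Real.rpow_lt_rpow_of_neg hpos hcn (by linarith)
  have h3 : (c ^ (-(1/β))) ^ (-β) = c := by
    rw [← Real.rpow_mul hc.le]
    rw [show -(1/β) * -β = 1 by field_simp]
    exact Real.rpow_one c
  rw [rK, if_neg hl0] at hl
  have : γ * |(l:ℝ)| ^ (-β) ≤ |(l:ℝ)| ^ (-β) := by
    have : (0:ℝ) ≤ |(l:ℝ)| ^ (-β) := Real.rpow_nonneg (abs_nonneg _) _
    nlinarith
  linarith

lemma Eset_finite (b : ℕ) (hb : 1 < b) (α β : ℝ) (hα : 0 < α) (hβ : 0 < β)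
    (γ1 γ2 : ℕ → ℝ) (hγ1 : ∀ j, 0 < γ1 j ∧ γ1 j ≤ 1) (hγ2 : ∀ j, 0 < γ2 j ∧ γ2 j ≤ 1)
    (ε : ℝ) (hε : 0 < ε) (s t : ℕ) : (Eset b α β γ1 γ2 ε s t).Finite := by
  have hε2 : (0:ℝ) < ε ^ 2 := by positivity
  have hfin1 : ∀ j : Fin s, {k : ℕ | ε ^ 2 < rho b α (γ1 j) k}.Finite :=
    fun j => rho_set_finite b hb α (γ1 j) hα (hγ1 j).2 _ hε2
  have hfin2 : ∀ j : Fin t, {l : ℤ | ε ^ 2 < rK β (γ2 j) l}.Finite :=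
    fun j => rK_set_finite β (γ2 j) hβ (hγ2 j).2 _ hε2
  apply Set.Finite.subset (Set.Finite.prod
    (Set.Finite.pi (fun j => hfin1 j)) (Set.Finite.pi (fun j => hfin2 j)))
  rintro ⟨k, l⟩ hkl
  simp only [Eset, Set.mem_setOf_eq, gt_iff_lt] at hkl
  have h01 : ∀ j : Fin s, 0 ≤ rho b α (γ1 j) (k j) := fun j => (rho_pos hb (hγ1 j).1 _).le
  have h11 : ∀ j : Fin s, rho b α (γ1 j) (k j) ≤ 1 :=
    fun j => rho_le_one hb (hγ1 j).1 (hγ1 j).2 hα _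
  have h02 : ∀ j : Fin t, 0 ≤ rK β (γ2 j) (l j) := fun j => (rK_pos (hγ2 j).1 _).le
  have h12 : ∀ j : Fin t, rK β (γ2 j) (l j) ≤ 1 :=
    fun j => rK_le_one (hγ2 j).1 (hγ2 j).2 hβ _
  have hP1 : ∀ j : Fin s, ε ^ 2 < rho b α (γ1 j) (k j) := by
    intro j
    have hp2le : (∏ i : Fin t, rK β (γ2 i) (l i)) ≤ 1 :=
      Finset.prod_le_one (fun i _ => h02 i) (fun i _ => h12 i)
    have hp1 : ε ^ 2 < ∏ i : Fin s, rho b α (γ1 i) (k i) := by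
      have h1n : 0 ≤ ∏ i : Fin s, rho b α (γ1 i) (k i) :=
        Finset.prod_nonneg (fun i _ => h01 i)
      nlinarith
    exact lt_of_lt_of_le hp1 (prod_le_factor _ h01 h11 j)
  have hP2 : ∀ j : Fin t, ε ^ 2 < rK β (γ2 j) (l j) := by
    intro j
    have hp1le : (∏ i : Fin s, rho b α (γ1 i) (k i)) ≤ 1 :=
      Finset.prod_le_one (fun i _ => h01 i) (fun i _ => h11 i)
    have hp2 : ε ^ 2 < ∏ i : Fin t, rK β (γ2 i) (l i) := by
      have h2n : 0 ≤ ∏ i : Fin t, rK β (γ2 i) (l i) :=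
        Finset.prod_nonneg (fun i _ => h02 i)
      nlinarith
    exact lt_of_lt_of_le hp2 (prod_le_factor _ h02 h12 j)
  exact Set.mem_prod.mpr ⟨fun j _ => hP1 j, fun j _ => hP2 j⟩


lemma summable_mul_pair {A B : Type*} (f : A → ℝ) (g : B → ℝ) (hf : Summable f)
    (hg : Summable g) (hf0 : ∀ a, 0 ≤ f a) (hg0 : ∀ b, 0 ≤ g b) :
    Summable (fun x : A × B => f x.1 * g x.2) ∧
      ∑' x : A × B, f x.1 * g x.2 = (∑' a, f a) * (∑' b, g b) := by
  have hs : Summable (fun x : A × B => f x.1 * g x.2) :=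
    hf.mul_of_nonneg hg hf0 hg0
  refine ⟨hs, ?_⟩
  rw [Summable.tsum_prod' hs (fun a => hg.mul_left (f a))]
  rw [tsum_congr (fun a => tsum_mul_left (a := f a) (f := g))]
  exact tsum_mul_right
lemma pi_tsum {ι : Type*} : ∀ (n : ℕ) (F : Fin n → ι → ℝ),
    (∀ j i, 0 ≤ F j i) → (∀ j, Summable (F j)) →
    Summable (fun x : Fin n → ι => ∏ j, F j (x j)) ∧
      ∑' x : Fin n → ι, ∏ j, F j (x j) = ∏ j, ∑' i, F j i := by
  intro n
  induction n with
  | zero =>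
    intro F h0 hs
    constructor
    · exact summable_of_finite_support (Set.Finite.subset (Set.finite_univ) (by simp))
    · rw [tsum_eq_single (fun i => i.elim0) (fun x hx => absurd (Subsingleton.elim x _) hx)]
      simp
  | succ n IH =>
    intro F h0 hs
    obtain ⟨hs2, ht2⟩ := IH (fun j => F j.succ) (fun j i => h0 _ i) (fun j => hs _)
    have hs2' : Summable (fun y : Fin n → ι => ∏ j, F j.succ (y j)) := by simpa using hs2
    have ht2' : ∑' y : Fin n → ι, ∏ j, F j.succ (y j) = ∏ j : Fin n, ∑' i, F j.succ i := by
      simpa using ht2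
    have hg0 : ∀ y : Fin n → ι, 0 ≤ ∏ j, F j.succ (y j) :=
      fun y => Finset.prod_nonneg fun j _ => h0 j.succ (y j)
    have hpair1 := (hs 0).mul_of_nonneg hs2' (h0 0) hg0
    have hpair2 : Summable (fun x : ι × (Fin n → ι) => F 0 x.1 * ∏ j, F j.succ (x.2 j)) := by
      simpa using hpair1
    let e : ι × (Fin n → ι) ≃ (Fin (n+1) → ι) := Fin.consEquiv (fun _ => ι)
    have key : ∀ p : ι × (Fin n → ι),
        (∏ j : Fin (n+1), F j (e p j)) = F 0 p.1 * ∏ j : Fin n, F j.succ (p.2 j) := by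
      rintro ⟨a, y⟩
      rw [Fin.prod_univ_succ]
      have h1 : e (a, y) 0 = a := by simp [e]
      have h2 : ∀ j : Fin n, e (a, y) j.succ = y j := by intro j; simp [e]
      rw [h1]
      congr 1
    constructor
    · apply (Equiv.summable_iff e).mp
      show Summable ((fun x : Fin (n+1) → ι => ∏ j, F j (x j)) ∘ e)
      have hce : ((fun x : Fin (n+1) → ι => ∏ j, F j (x j)) ∘ e)
          = fun p : ι × (Fin n → ι) => F 0 p.1 * ∏ j : Fin n, F j.succ (p.2 j) :=
        funext fun p => key p
      rw [hce]; exact hpair2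
    · rw [← Equiv.tsum_eq e (fun x => ∏ j, F j (x j)), tsum_congr key]
      rw [Summable.tsum_prod' hpair2 (fun a => by simpa using hs2'.mul_left (F 0 a))]
      rw [tsum_congr (fun a => tsum_mul_left (a := F 0 a))]
      show (∑' a : ι, F 0 a * ∑' y : Fin n → ι, ∏ j : Fin n, F j.succ (y j)) = _
      rw [tsum_mul_right, ht2', Fin.prod_univ_succ]

noncomputable def A0 (b : ℕ) (α p : ℝ) : ℝ :=
  ∑' k : ℕ, (if k = 0 then 0 else (b:ℝ) ^ (-(α * p * (Nat.log b k : ℝ))))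

noncomputable def B0 (β p : ℝ) : ℝ := ∑' l : ℤ, |(l:ℝ)| ^ (-(β * p))

lemma gA_summable (b : ℕ) (hb : 1 < b) (α p : ℝ) (hαp : 1 < α * p) :
    Summable (fun k : ℕ => (if k = 0 then 0 else (b:ℝ) ^ (-(α * p * (Nat.log b k : ℝ))))) := by
  have hbR : (1:ℝ) < b := by exact_mod_cast hb
  have hb0 : (0:ℝ) < b := by linarith
  apply Summable.of_nonneg_of_le
    (f := fun k : ℕ => (b:ℝ) ^ (α * p) * (k:ℝ) ^ (-(α * p)))
  · intro k; split
    · exact le_refl 0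
    · positivity
  · intro k
    by_cases hk : k = 0
    · subst hk
      simp only [if_pos rfl, Nat.cast_zero]
      rw [Real.zero_rpow (by linarith)]
      simp
    · rw [if_neg hk]
      have hk1 : 1 ≤ k := Nat.one_le_iff_ne_zero.mpr hk
      have hlt : (k:ℝ) < (b:ℝ) ^ ((Nat.log b k : ℝ) + 1) := by
        have := Nat.lt_pow_succ_log_self hb k
        calc (k:ℝ) < ((b ^ (Nat.log b k + 1) : ℕ) : ℝ) := by exact_mod_cast this
          _ = (b:ℝ) ^ ((Nat.log b k : ℝ) + 1) := by
            push_cast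
            rw [← Real.rpow_natCast (b:ℝ) (Nat.log b k + 1)]
            push_cast; ring_nf
      -- b ^ (-(αp * log k)) ≤ b^(αp) * k^(-αp)
      have hkpos : (0:ℝ) < k := by exact_mod_cast hk1
      have h2 : (k:ℝ) ^ (-(α * p)) ≥ ((b:ℝ) ^ ((Nat.log b k : ℝ) + 1)) ^ (-(α * p)) := by
        apply Real.rpow_le_rpow_of_nonpos hkpos hlt.le (by linarith)
      have h3 : ((b:ℝ) ^ ((Nat.log b k : ℝ) + 1)) ^ (-(α * p))
          = (b:ℝ) ^ (-(α * p)) * (b:ℝ) ^ (-(α * p * (Nat.log b k : ℝ))) := by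
        rw [← Real.rpow_mul hb0.le, ← Real.rpow_add hb0]
        ring_nf
      have h4 : (b:ℝ) ^ (α * p) * (b:ℝ) ^ (-(α * p)) = 1 := by
        rw [← Real.rpow_add hb0]; simp
      calc (b:ℝ) ^ (-(α * p * (Nat.log b k : ℝ)))
          = (b:ℝ) ^ (α * p) * ((b:ℝ) ^ (-(α * p)) * (b:ℝ) ^ (-(α * p * (Nat.log b k : ℝ)))) := by
            rw [← mul_assoc, h4, one_mul]
        _ = (b:ℝ) ^ (α * p) * ((b:ℝ) ^ ((Nat.log b k : ℝ) + 1)) ^ (-(α * p)) := by rw [h3]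
        _ ≤ (b:ℝ) ^ (α * p) * (k:ℝ) ^ (-(α * p)) := by
            apply mul_le_mul_of_nonneg_left h2 (by positivity)
  · apply Summable.mul_left
    exact Real.summable_nat_rpow.mpr (by linarith)

lemma gB_summable (β p : ℝ) (hβp : 1 < β * p) :
    Summable (fun l : ℤ => |(l:ℝ)| ^ (-(β * p))) :=
  Real.summable_abs_int_rpow hβp

lemma A0_nonneg (b : ℕ) (α p : ℝ) : 0 ≤ A0 b α p := by
  apply tsum_nonneg
  intro k
  split
  · exact le_refl 0
  · exact Real.rpow_nonneg (by positivity) _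

lemma B0_nonneg (β p : ℝ) : 0 ≤ B0 β p :=
  tsum_nonneg (fun l => Real.rpow_nonneg (abs_nonneg _) _)

lemma indicator_nat_summable : Summable (fun k : ℕ => if k = 0 then (1:ℝ) else 0) := by
  apply summable_of_ne_finset_zero (s := {0})
  intro k hk
  simp only [Finset.mem_singleton] at hk
  rw [if_neg hk]

lemma indicator_int_summable : Summable (fun l : ℤ => if l = 0 then (1:ℝ) else 0) := by
  apply summable_of_ne_finset_zero (s := {0})
  intro l hl
  simp only [Finset.mem_singleton] at hl
  rw [if_neg hl]

lemma rho_rpow_eq (b : ℕ) (hb : 1 < b) (α γ p : ℝ) (hγ : 0 < γ) (hp : 0 < p) :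
    (fun k : ℕ => rho b α γ k ^ p) =
      fun k : ℕ => γ ^ p * (if k = 0 then 0 else (b:ℝ) ^ (-(α * p * (Nat.log b k : ℝ))))
        + (if k = 0 then (1:ℝ) else 0) := by
  funext k
  by_cases hk : k = 0
  · subst hk; simp [rho]
  · have hb0 : (0:ℝ) < b := by positivity
    rw [rho, if_neg hk, if_neg hk, if_neg hk]
    rw [Real.mul_rpow hγ.le (Real.rpow_nonneg hb0.le _)]
    rw [← Real.rpow_mul hb0.le]
    ring_nf

lemma rK_rpow_eq (β γ p : ℝ) (hγ : 0 < γ) (hβp : 0 < β * p) :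
    (fun l : ℤ => rK β γ l ^ p) =
      fun l : ℤ => γ ^ p * |(l:ℝ)| ^ (-(β * p)) + (if l = 0 then (1:ℝ) else 0) := by
  funext l
  by_cases hl : l = 0
  · subst hl
    have h00 : |((0:ℤ):ℝ)| ^ (-(β * p)) = 0 := by
      rw [Int.cast_zero, abs_zero, Real.zero_rpow (by linarith)]
    simp [rK, h00, Real.one_rpow]
    exact Or.inr (Real.zero_rpow (by linarith))
  · rw [rK, if_neg hl, if_neg hl]
    rw [Real.mul_rpow hγ.le (Real.rpow_nonneg (abs_nonneg _) _)]
    rw [← Real.rpow_mul (abs_nonneg _)]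
    ring_nf

lemma aux_rpow_unbounded (K c : ℝ) (hc : 0 < c)
    (h : ∀ n : ℕ, 1 ≤ n → (n:ℝ) ^ c ≤ K) : False := by
  obtain ⟨n, hn⟩ := exists_nat_gt (max 1 ((max K 1) ^ (1/c)))
  have h1 : (1:ℝ) ≤ n := le_trans (le_max_left _ _) hn.le
  have h1n : 1 ≤ n := by exact_mod_cast h1
  have h2 : (max K 1) ^ (1/c) < n := lt_of_le_of_lt (le_max_right _ _) hn
  have hMK : (0:ℝ) ≤ max K 1 := le_trans zero_le_one (le_max_right _ _)
  have h3 : ((max K 1) ^ (1/c)) ^ c < (n:ℝ) ^ c :=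
    Real.rpow_lt_rpow (Real.rpow_nonneg hMK _) h2 hc
  rw [← Real.rpow_mul hMK, one_div, inv_mul_cancel₀ hc.ne', Real.rpow_one] at h3
  have h4 : K ≤ max K 1 := le_max_left _ _
  have := h n h1n
  linarith

lemma sq_rpow (ε τ : ℝ) (hε : 0 ≤ ε) : (ε ^ 2) ^ τ = ε ^ (2 * τ) := by
  rw [← Real.rpow_natCast ε 2, ← Real.rpow_mul hε]
  norm_num

lemma band_generic (τ C p : ℝ) (hτ : 0 ≤ τ) (hC : 0 ≤ C) (hp : τ/2 < p)
    (γ : ℕ → ℝ) (hγ : ∀ j, 0 < γ j ∧ γ j ≤ 1)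
    (hcount : ∀ (m s : ℕ),
      (((Finset.range s).filter (fun j => (2:ℝ) ^ (-((m:ℝ)+1)) < γ j)).card : ℝ)
        ≤ C * (2:ℝ) ^ (((m:ℝ)+1) * (τ/2))) :
    Summable (fun j => γ j ^ p) := by
  have hp0 : 0 < p := lt_of_le_of_lt (by linarith) hp
  set r : ℝ := (2:ℝ) ^ (τ/2 - p) with hr
  have hr0 : 0 ≤ r := Real.rpow_nonneg (by norm_num) _
  have hr1 : r < 1 := Real.rpow_lt_one_of_one_lt_of_neg (by norm_num) (by linarith)
  set M : ℝ := C * (2:ℝ) ^ (τ/2) * (1 - r)⁻¹ with hM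
  apply summable_of_sum_range_le (c := M)
    (fun j => Real.rpow_nonneg (hγ j).1.le _)
  intro s
  set band : ℕ → ℕ := fun j => ⌊Real.logb 2 (γ j)⁻¹⌋₊ with hbanddef
  have hinv : ∀ j, 1 ≤ (γ j)⁻¹ := by
    intro j
    have h1 := (hγ j).1
    have h2 := (hγ j).2
    have h3 : 0 < (γ j)⁻¹ := inv_pos.mpr h1
    nlinarith [mul_inv_cancel₀ (ne_of_gt h1)]
  have hband1 : ∀ j, γ j ≤ (2:ℝ) ^ (-(band j : ℝ)) := by
    intro j
    have hinvpos : 0 < (γ j)⁻¹ := inv_pos.mpr (hγ j).1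
    have hlog0 : 0 ≤ Real.logb 2 (γ j)⁻¹ := Real.logb_nonneg one_lt_two (hinv j)
    have hf1 : (band j : ℝ) ≤ Real.logb 2 (γ j)⁻¹ := Nat.floor_le hlog0
    have e : (2:ℝ) ^ Real.logb 2 (γ j)⁻¹ = (γ j)⁻¹ :=
      Real.rpow_logb two_pos (by norm_num) hinvpos
    have h2b : (2:ℝ) ^ ((band j : ℝ)) ≤ (γ j)⁻¹ := by
      rw [← e]; exact Real.rpow_le_rpow_of_exponent_le one_le_two hf1
    have h2bp : (0:ℝ) < (2:ℝ) ^ ((band j : ℝ)) := Real.rpow_pos_of_pos two_pos _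
    have := inv_anti₀ h2bp h2b
    rw [inv_inv] at this
    rw [Real.rpow_neg (by norm_num)]
    exact this
  have hband2 : ∀ j, (2:ℝ) ^ (-((band j : ℝ) + 1)) < γ j := by
    intro j
    have hinvpos : 0 < (γ j)⁻¹ := inv_pos.mpr (hγ j).1
    have hf2 : Real.logb 2 (γ j)⁻¹ < (band j : ℝ) + 1 := Nat.lt_floor_add_one _
    have e : (2:ℝ) ^ Real.logb 2 (γ j)⁻¹ = (γ j)⁻¹ :=
      Real.rpow_logb two_pos (by norm_num) hinvpos
    have h2b : (γ j)⁻¹ < (2:ℝ) ^ ((band j : ℝ) + 1) := by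
      rw [← e]; exact Real.rpow_lt_rpow_of_exponent_lt one_lt_two hf2
    have := inv_strictAnti₀ hinvpos h2b
    rw [inv_inv] at this
    rw [Real.rpow_neg (by norm_num)]
    exact this
  calc ∑ j ∈ Finset.range s, γ j ^ p
      = ∑ m ∈ (Finset.range s).image band,
          ∑ j ∈ (Finset.range s).filter (fun j => band j = m), γ j ^ p :=
        (Finset.sum_fiberwise_of_maps_to
          (fun j hj => Finset.mem_image_of_mem band hj) _).symm
    _ ≤ ∑ m ∈ (Finset.range s).image band, (C * (2:ℝ) ^ (τ/2)) * r ^ m := by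
        apply Finset.sum_le_sum
        intro m _
        have hinner : ∑ j ∈ (Finset.range s).filter (fun j => band j = m), γ j ^ p
            ≤ (((Finset.range s).filter (fun j => band j = m)).card : ℝ)
              * ((2:ℝ) ^ (-(m:ℝ))) ^ p := by
          rw [← nsmul_eq_mul]
          apply Finset.sum_le_card_nsmul
          intro j hj
          have hbj : band j = m := (Finset.mem_filter.mp hj).2
          have := hband1 j
          rw [hbj] at this
          exact Real.rpow_le_rpow (hγ j).1.le this hp0.le
        have hcard : (((Finset.range s).filter (fun j => band j = m)).card : ℝ)
            ≤ C * (2:ℝ) ^ (((m:ℝ)+1) * (τ/2)) := by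
          refine le_trans ?_ (hcount m s)
          have hsub : (Finset.range s).filter (fun j => band j = m)
              ⊆ (Finset.range s).filter (fun j => (2:ℝ) ^ (-((m:ℝ)+1)) < γ j) := by
            intro j hj
            obtain ⟨hjr, hbj⟩ := Finset.mem_filter.mp hj
            refine Finset.mem_filter.mpr ⟨hjr, ?_⟩
            have := hband2 j
            rw [hbj] at this
            exact this
          exact_mod_cast Nat.cast_le.mpr (Finset.card_le_card hsub)
        have hBm : (0:ℝ) ≤ ((2:ℝ) ^ (-(m:ℝ))) ^ p := Real.rpow_nonneg (Real.rpow_nonneg (by norm_num) _) _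
        have heq : (C * (2:ℝ) ^ (((m:ℝ)+1) * (τ/2))) * ((2:ℝ) ^ (-(m:ℝ))) ^ p
            = (C * (2:ℝ) ^ (τ/2)) * r ^ m := by
          rw [hr, ← Real.rpow_natCast ((2:ℝ) ^ (τ/2 - p)) m, ← Real.rpow_mul (by norm_num : (0:ℝ) ≤ 2),
            ← Real.rpow_mul (by norm_num : (0:ℝ) ≤ 2), mul_assoc, mul_assoc,
            ← Real.rpow_add two_pos, ← Real.rpow_add two_pos]
          congr 1
          ring
        calc ∑ j ∈ (Finset.range s).filter (fun j => band j = m), γ j ^ p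
            ≤ (((Finset.range s).filter (fun j => band j = m)).card : ℝ)
              * ((2:ℝ) ^ (-(m:ℝ))) ^ p := hinner
          _ ≤ (C * (2:ℝ) ^ (((m:ℝ)+1) * (τ/2))) * ((2:ℝ) ^ (-(m:ℝ))) ^ p :=
              mul_le_mul_of_nonneg_right hcard hBm
          _ = (C * (2:ℝ) ^ (τ/2)) * r ^ m := heq
    _ = (C * (2:ℝ) ^ (τ/2)) * ∑ m ∈ (Finset.range s).image band, r ^ m := by
        rw [Finset.mul_sum]
    _ ≤ (C * (2:ℝ) ^ (τ/2)) * (1 - r)⁻¹ := by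
        apply mul_le_mul_of_nonneg_left _ (by positivity)
        rw [← tsum_geometric_of_lt_one hr0 hr1]
        exact Summable.sum_le_tsum _ (fun i _ => pow_nonneg hr0 i) (summable_geometric_of_lt_one hr0 hr1)
    _ = M := rfl

lemma rho_pow_tsum (b : ℕ) (hb : 1 < b) (α γ p : ℝ) (hγ0 : 0 < γ)
    (hαp : 1 < α * p) (hp : 0 < p) :
    Summable (fun k : ℕ => rho b α γ k ^ p) ∧
      ∑' k : ℕ, rho b α γ k ^ p = 1 + γ ^ p * A0 b α p := by
  rw [rho_rpow_eq b hb α γ p hγ0 hp]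
  constructor
  · exact ((gA_summable b hb α p hαp).mul_left _).add indicator_nat_summable
  · rw [Summable.tsum_add ((gA_summable b hb α p hαp).mul_left _) indicator_nat_summable,
      tsum_mul_left, show (∑' b : ℕ, if b = 0 then (1:ℝ) else 0) = 1 from by
        simpa using tsum_ite_eq (0:ℕ) (fun _ => (1:ℝ)), A0]
    ring

lemma rK_pow_tsum (β γ p : ℝ) (hγ0 : 0 < γ) (hβp : 1 < β * p) :
    Summable (fun l : ℤ => rK β γ l ^ p) ∧
      ∑' l : ℤ, rK β γ l ^ p = 1 + γ ^ p * B0 β p := by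
  rw [rK_rpow_eq β γ p hγ0 (by linarith)]
  constructor
  · exact ((gB_summable β p hβp).mul_left _).add indicator_int_summable
  · rw [Summable.tsum_add ((gB_summable β p hβp).mul_left _) indicator_int_summable,
      tsum_mul_left, show (∑' b : ℤ, if b = 0 then (1:ℝ) else 0) = 1 from by
        simpa using tsum_ite_eq (0:ℤ) (fun _ => (1:ℝ)), B0]
    ring

lemma Ncount_eq (b : ℕ) (α β : ℝ) (γ1 γ2 : ℕ → ℝ) (ε : ℝ) (s t : ℕ) :
    Ncount b α β γ1 γ2 ε s t = (Eset b α β γ1 γ2 ε s t).ncard := rfl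

lemma Ncount_upper (b : ℕ) (hb : 1 < b) (α β : ℝ) (hα : 1 < α) (hβ : 1 < β)
    (γ1 γ2 : ℕ → ℝ) (hγ1 : ∀ j, 0 < γ1 j ∧ γ1 j ≤ 1) (hγ2 : ∀ j, 0 < γ2 j ∧ γ2 j ≤ 1)
    (p : ℝ) (hp0 : 0 < p) (hαp : 1 < α * p) (hβp : 1 < β * p)
    (hsum1 : Summable fun j => γ1 j ^ p) (hsum2 : Summable fun j => γ2 j ^ p) :
    ∀ ε : ℝ, 0 < ε → ε < 1 → ∀ s t : ℕ, (Ncount b α β γ1 γ2 ε s t : ℝ) ≤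
      (Real.exp (A0 b α p * ∑' j, γ1 j ^ p) * Real.exp (B0 β p * ∑' j, γ2 j ^ p))
        * ε ^ (-(2*p)) := by
  have hα0 : (0:ℝ) < α := by linarith
  have hβ0 : (0:ℝ) < β := by linarith
  set T1 := ∑' j, γ1 j ^ p with hT1
  set T2 := ∑' j, γ2 j ^ p with hT2
  set Cu := Real.exp (A0 b α p * T1) * Real.exp (B0 β p * T2) with hCu
  intro ε hε0 hε1 s t
  set F1 : Fin s → ℕ → ℝ := fun j k => rho b α (γ1 j) k ^ p with hF1
  set F2 : Fin t → ℤ → ℝ := fun j l => rK β (γ2 j) l ^ p with hF2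
  have hF1n : ∀ (j : Fin s) (k : ℕ), 0 ≤ F1 j k :=
    fun j k => Real.rpow_nonneg (rho_pos hb (hγ1 j).1 k).le p
  have hF2n : ∀ (j : Fin t) (l : ℤ), 0 ≤ F2 j l :=
    fun j l => Real.rpow_nonneg (rK_pos (hγ2 j).1 l).le p
  have hF1s : ∀ j : Fin s, Summable (F1 j) :=
    fun j => (rho_pow_tsum b hb α (γ1 j) p (hγ1 j).1 hαp hp0).1
  have hF2s : ∀ j : Fin t, Summable (F2 j) :=
    fun j => (rK_pow_tsum β (γ2 j) p (hγ2 j).1 hβp).1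
  obtain ⟨hpi1s, hpi1t⟩ := pi_tsum s F1 hF1n hF1s
  obtain ⟨hpi2s, hpi2t⟩ := pi_tsum t F2 hF2n hF2s
  have hg1n : ∀ x : Fin s → ℕ, 0 ≤ ∏ j, F1 j (x j) :=
    fun x => Finset.prod_nonneg fun j _ => hF1n j (x j)
  have hg2n : ∀ y : Fin t → ℤ, 0 ≤ ∏ j, F2 j (y j) :=
    fun y => Finset.prod_nonneg fun j _ => hF2n j (y j)
  obtain ⟨hPs, hPt⟩ := summable_mul_pair _ _ hpi1s hpi2s hg1n hg2n
  -- the tsum bound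
  have hprod_bound : (∏ j : Fin s, ∑' k, F1 j k) * (∏ j : Fin t, ∑' l, F2 j l) ≤ Cu := by
    have hb1 : ∀ j : Fin s, ∑' k, F1 j k = 1 + (γ1 j) ^ p * A0 b α p :=
      fun j => (rho_pow_tsum b hb α (γ1 j) p (hγ1 j).1 hαp hp0).2
    have hb2 : ∀ j : Fin t, ∑' l, F2 j l = 1 + (γ2 j) ^ p * B0 β p :=
      fun j => (rK_pow_tsum β (γ2 j) p (hγ2 j).1 hβp).2
    have hA0 := A0_nonneg b α p
    have hB0 := B0_nonneg β p
    have h1 : (∏ j : Fin s, ∑' k, F1 j k) ≤ Real.exp (A0 b α p * T1) := by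
      rw [Finset.prod_congr rfl (fun j _ => hb1 j)]
      calc ∏ j : Fin s, (1 + (γ1 j) ^ p * A0 b α p)
          ≤ ∏ j : Fin s, Real.exp ((γ1 j) ^ p * A0 b α p) := by
            apply Finset.prod_le_prod
            · intro j _
              have : (0:ℝ) ≤ (γ1 j) ^ p * A0 b α p := by
                apply mul_nonneg (Real.rpow_nonneg (hγ1 j).1.le p) hA0
              linarith
            · intro j _
              have := Real.add_one_le_exp ((γ1 j) ^ p * A0 b α p)
              linarith
        _ = Real.exp (∑ j : Fin s, (γ1 j) ^ p * A0 b α p) := (Real.exp_sum _ _).symm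
        _ ≤ Real.exp (A0 b α p * T1) := by
            apply Real.exp_le_exp.mpr
            have : ∑ j : Fin s, (γ1 j) ^ p * A0 b α p
                = A0 b α p * ∑ j ∈ Finset.range s, (γ1 j) ^ p := by
              rw [← Fin.sum_univ_eq_sum_range (fun j => (γ1 j)^p) s, Finset.mul_sum]
              exact Finset.sum_congr rfl fun j _ => mul_comm _ _
            rw [this]
            apply mul_le_mul_of_nonneg_left _ hA0
            exact Summable.sum_le_tsum _ (fun i _ => Real.rpow_nonneg (hγ1 i).1.le p) hsum1
    have h2 : (∏ j : Fin t, ∑' l, F2 j l) ≤ Real.exp (B0 β p * T2) := by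
      rw [Finset.prod_congr rfl (fun j _ => hb2 j)]
      calc ∏ j : Fin t, (1 + (γ2 j) ^ p * B0 β p)
          ≤ ∏ j : Fin t, Real.exp ((γ2 j) ^ p * B0 β p) := by
            apply Finset.prod_le_prod
            · intro j _
              have : (0:ℝ) ≤ (γ2 j) ^ p * B0 β p := by
                apply mul_nonneg (Real.rpow_nonneg (hγ2 j).1.le p) hB0
              linarith
            · intro j _
              have := Real.add_one_le_exp ((γ2 j) ^ p * B0 β p)
              linarith
        _ = Real.exp (∑ j : Fin t, (γ2 j) ^ p * B0 β p) := (Real.exp_sum _ _).symm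
        _ ≤ Real.exp (B0 β p * T2) := by
            apply Real.exp_le_exp.mpr
            have : ∑ j : Fin t, (γ2 j) ^ p * B0 β p
                = B0 β p * ∑ j ∈ Finset.range t, (γ2 j) ^ p := by
              rw [← Fin.sum_univ_eq_sum_range (fun j => (γ2 j)^p) t, Finset.mul_sum]
              exact Finset.sum_congr rfl fun j _ => mul_comm _ _
            rw [this]
            apply mul_le_mul_of_nonneg_left _ hB0
            exact Summable.sum_le_tsum _ (fun i _ => Real.rpow_nonneg (hγ2 i).1.le p) hsum2
    have hpos1 : (0:ℝ) ≤ ∏ j : Fin s, ∑' k, F1 j k :=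
      Finset.prod_nonneg fun j _ => tsum_nonneg (fun k => hF1n j k)
    have hexp2 : (0:ℝ) ≤ Real.exp (B0 β p * T2)  := (Real.exp_pos _).le
    have hpos2 : (0:ℝ) ≤ ∏ j : Fin t, ∑' l, F2 j l :=
      Finset.prod_nonneg fun j _ => tsum_nonneg (fun l => hF2n j l)
    rw [hCu]
    apply mul_le_mul h1 h2 hpos2 (Real.exp_pos _).le
  -- counting
  have hEfin : (Eset b α β γ1 γ2 ε s t).Finite :=
    Eset_finite b hb α β hα0 hβ0 γ1 γ2 hγ1 hγ2 ε hε0 s t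
  have hcard : ((Ncount b α β γ1 γ2 ε s t : ℕ) : ℝ) * ε ^ (2*p) ≤ Cu := by
    have hmem : ∀ x ∈ hEfin.toFinset, ε ^ (2*p) ≤ (∏ j, F1 j (x.1 j)) * (∏ j, F2 j (x.2 j)) := by
      intro x hx
      rw [Set.Finite.mem_toFinset] at hx
      have hv : ε ^ 2 < (∏ j : Fin s, rho b α (γ1 j) (x.1 j)) * (∏ j : Fin t, rK β (γ2 j) (x.2 j)) := hx
      have hveq : (∏ j, F1 j (x.1 j)) * (∏ j, F2 j (x.2 j))
          = ((∏ j : Fin s, rho b α (γ1 j) (x.1 j)) * (∏ j : Fin t, rK β (γ2 j) (x.2 j))) ^ p := by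
        simp only [hF1, hF2]
        rw [Real.finset_prod_rpow Finset.univ (fun j : Fin s => rho b α (γ1 j) (x.1 j))
          (fun j _ => (rho_pos hb (hγ1 j).1 _).le) p]
        rw [Real.finset_prod_rpow Finset.univ (fun j : Fin t => rK β (γ2 j) (x.2 j))
          (fun j _ => (rK_pos (hγ2 j).1 _).le) p]
        have hP1n : (0:ℝ) ≤ ∏ j : Fin s, rho b α (γ1 j) (x.1 j) :=
          Finset.prod_nonneg fun j _ => (rho_pos hb (hγ1 j).1 (x.1 j)).le
        have hP2n : (0:ℝ) ≤ ∏ j : Fin t, rK β (γ2 j) (x.2 j) :=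
          Finset.prod_nonneg fun j _ => (rK_pos (hγ2 j).1 (x.2 j)).le
        rw [← Real.mul_rpow hP1n hP2n]
      rw [hveq, ← sq_rpow ε p hε0.le]
      exact Real.rpow_le_rpow (by positivity) hv.le hp0.le
    have hsum_le : ∑ x ∈ hEfin.toFinset, (∏ j, F1 j (x.1 j)) * (∏ j, F2 j (x.2 j))
        ≤ (∏ j : Fin s, ∑' k, F1 j k) * (∏ j : Fin t, ∑' l, F2 j l) := by
      rw [← hpi1t, ← hpi2t, ← hPt]
      apply Summable.sum_le_tsum _ (fun x _ => mul_nonneg (hg1n x.1) (hg2n x.2)) hPs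
    have hcn := Finset.card_nsmul_le_sum hEfin.toFinset _ _ hmem
    rw [nsmul_eq_mul] at hcn
    have hNeq : (Ncount b α β γ1 γ2 ε s t : ℝ) = (hEfin.toFinset.card : ℝ) := by
      rw [Ncount_eq, Set.ncard_eq_toFinset_card _ hEfin]
    rw [hNeq]
    calc (hEfin.toFinset.card : ℝ) * ε ^ (2*p)
        ≤ ∑ x ∈ hEfin.toFinset, (∏ j, F1 j (x.1 j)) * (∏ j, F2 j (x.2 j)) := hcn
      _ ≤ (∏ j : Fin s, ∑' k, F1 j k) * (∏ j : Fin t, ∑' l, F2 j l) := hsum_le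
      _ ≤ Cu := hprod_bound
  have hεp : (0:ℝ) < ε ^ (2*p) := Real.rpow_pos_of_pos hε0 _
  rw [Real.rpow_neg hε0.le]
  rw [← le_div_iff₀ hεp] at hcard
  · calc (Ncount b α β γ1 γ2 ε s t : ℝ) ≤ Cu / ε ^ (2*p) := hcard
      _ = Cu * (ε ^ (2*p))⁻¹ := div_eq_mul_inv _ _

lemma lower_alpha (b : ℕ) (hb : 1 < b) (α β : ℝ) (hα : 1 < α) (hβ : 1 < β)
    (γ1 γ2 : ℕ → ℝ) (hγ1 : ∀ j, 0 < γ1 j ∧ γ1 j ≤ 1) (hγ2 : ∀ j, 0 < γ2 j ∧ γ2 j ≤ 1)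
    (τ C : ℝ) (hτ : 0 ≤ τ) (hC : 0 ≤ C)
    (hA : ∀ ε : ℝ, 0 < ε → ε < 1 → ∀ s t : ℕ,
      (Ncount b α β γ1 γ2 ε s t : ℝ) ≤ C * ε ^ (-τ)) :
    1/α ≤ τ/2 := by
  by_contra hcon
  push_neg at hcon
  have hα0 : (0:ℝ) < α := by linarith
  have hβ0 : (0:ℝ) < β := by linarith
  have hcc : α * (τ/2) < 1 := by
    have h1 := mul_lt_mul_of_pos_left hcon hα0
    rwa [mul_one_div_cancel hα0.ne'] at h1
  have hbR : (1:ℝ) < b := by exact_mod_cast hb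
  have hb0 : (0:ℝ) < b := by linarith
  set γ : ℝ := γ1 0 with hγdef
  have hγ0 : 0 < γ := (hγ1 0).1
  have hγle : γ ≤ 1 := (hγ1 0).2
  set c : ℝ := 1 - α * (τ/2) with hcdef
  have hc : 0 < c := by simp only [hcdef]; linarith
  set K : ℝ := C * ((γ/2) ^ (-(τ/2))) with hK
  apply aux_rpow_unbounded K c hc
  intro n hn
  obtain ⟨m, rfl⟩ := Nat.exists_eq_succ_of_ne_zero (by omega : n ≠ 0)
  set u : ℝ := γ * (b:ℝ) ^ (-(α*(m:ℝ))) / 2 with hu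
  have hαm : (0:ℝ) ≤ α * (m:ℝ) := by positivity
  have hbm1 : (b:ℝ) ^ (-(α*(m:ℝ))) ≤ 1 :=
    Real.rpow_le_one_of_one_le_of_nonpos hbR.le (by linarith)
  have hbm0 : (0:ℝ) < (b:ℝ) ^ (-(α*(m:ℝ))) := Real.rpow_pos_of_pos hb0 _
  have hu0 : 0 < u := by rw [hu]; positivity
  have hu1 : u < 1 := by rw [hu]; nlinarith
  set ε : ℝ := Real.sqrt u with hεdef
  have hε0 : 0 < ε := Real.sqrt_pos.mpr hu0
  have hε2 : ε ^ 2 = u := Real.sq_sqrt hu0.le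
  have hε1 : ε < 1 := by nlinarith [Real.sqrt_nonneg u]
  have hcount := hA ε hε0 hε1 1 0
  have hEfin := Eset_finite b hb α β hα0 hβ0 γ1 γ2 hγ1 hγ2 ε hε0 1 0
  set g : ℕ → (Fin 1 → ℕ) × (Fin 0 → ℤ) :=
    (fun n' => (fun _ => n', fun i => i.elim0)) with hg
  have hginj : Function.Injective g := by
    intro a a' hab
    exact congrFun (congrArg Prod.fst hab) 0
  have hsub : g '' (Set.Iio (b ^ (m+1))) ⊆ Eset b α β γ1 γ2 ε 1 0 := by
    rintro _ ⟨n', hn', rfl⟩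
    simp only [Set.mem_Iio] at hn'
    have hrho_ge : γ * (b:ℝ) ^ (-(α*(m:ℝ))) ≤ rho b α (γ1 0) n' := by
      by_cases hn0 : n' = 0
      · subst hn0
        rw [rho_zero]
        nlinarith
      · rw [rho, if_neg hn0]
        have hlog : Nat.log b n' ≤ m := by
          have := Nat.log_lt_of_lt_pow hn0 hn'
          omega
        have hexple : (b:ℝ) ^ (-(α * (m:ℝ))) ≤ (b:ℝ) ^ (-(α * (Nat.log b n' : ℝ))) := by
          apply Real.rpow_le_rpow_of_exponent_le hbR.le
          have : (Nat.log b n' : ℝ) ≤ (m:ℝ) := by exact_mod_cast hlog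
          nlinarith
        exact mul_le_mul_of_nonneg_left hexple hγ0.le
    have hmem2 : ε ^ 2 < rho b α (γ1 0) n' := by
      rw [hε2, hu]
      have hv0 : 0 < γ * (b:ℝ) ^ (-(α*(m:ℝ))) := by positivity
      linarith
    show ε ^ 2 <
      (∏ j : Fin 1, rho b α (γ1 j) ((fun _ => n') j)) * ∏ j : Fin 0, rK β (γ2 j) ((fun i => i.elim0 : Fin 0 → ℤ) j)
    have e1 : (∏ j : Fin 1, rho b α (γ1 j) ((fun _ => n') j)) = rho b α (γ1 0) n' := by
      rw [Fin.prod_univ_one]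
      norm_num
    have e2 : (∏ j : Fin 0, rK β (γ2 j) ((fun i => i.elim0 : Fin 0 → ℤ) j)) = 1 := by
      simp
    rw [e1, e2, mul_one]
    exact hmem2
  have hcard_ge : ((b:ℝ)) ^ ((m:ℝ)+1) ≤ (Ncount b α β γ1 γ2 ε 1 0 : ℝ) := by
    have h1 : (g '' (Set.Iio (b ^ (m+1)))).ncard = b ^ (m+1) := by
      rw [Set.ncard_image_of_injective _ hginj, ← Finset.coe_Iio, Set.ncard_coe_finset,
        Nat.card_Iio]
    have h2 := Set.ncard_le_ncard hsub hEfin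
    rw [Ncount_eq]
    rw [h1] at h2
    calc (b:ℝ) ^ ((m:ℝ)+1) = ((b ^ (m+1) : ℕ) : ℝ) := by
          rw [show ((m:ℝ)+1) = ((m+1 : ℕ):ℝ) by push_cast; ring, Real.rpow_natCast]
          push_cast; ring
      _ ≤ _ := by exact_mod_cast h2
  have hεt : ε ^ (-τ) = (γ/2) ^ (-(τ/2)) * (b:ℝ) ^ ((m:ℝ)*(α*(τ/2))) := by
    have h1 : ε ^ (-τ) = (ε^2) ^ (-(τ/2)) := by
      rw [sq_rpow ε (-(τ/2)) hε0.le]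
      congr 1; ring
    rw [h1, hε2, hu, show γ * (b:ℝ) ^ (-(α*(m:ℝ))) / 2 = (γ/2) * (b:ℝ) ^ (-(α*(m:ℝ))) by ring,
      Real.mul_rpow (by positivity) (by positivity)]
    congr 1
    rw [← Real.rpow_mul hb0.le]
    congr 1; ring
  have hbp2 : (0:ℝ) < (b:ℝ) ^ ((m:ℝ)*(α*(τ/2))) := Real.rpow_pos_of_pos hb0 _
  have hmain : (b:ℝ) ^ ((m:ℝ)+1) ≤ K * (b:ℝ) ^ ((m:ℝ)*(α*(τ/2))) := by
    calc (b:ℝ) ^ ((m:ℝ)+1) ≤ C * ε ^ (-τ) := le_trans hcard_ge hcount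
      _ = K * (b:ℝ) ^ ((m:ℝ)*(α*(τ/2))) := by rw [hεt, hK]; ring
  have hdiv : (b:ℝ) ^ (((m:ℝ)+1) - (m:ℝ)*(α*(τ/2))) ≤ K := by
    rw [Real.rpow_sub hb0, div_le_iff₀ hbp2]
    exact hmain
  have hmb : ((m:ℕ)) + 1 ≤ b ^ m := Nat.lt_pow_self (n := m) hb
  calc ((m.succ : ℕ) : ℝ) ^ c ≤ ((b ^ m : ℕ) : ℝ) ^ c := by
        apply Real.rpow_le_rpow (by positivity) _ hc.le
        exact_mod_cast hmb
    _ = (b:ℝ) ^ ((m:ℝ) * c) := by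
        push_cast
        rw [← Real.rpow_natCast (b:ℝ) m, ← Real.rpow_mul hb0.le]
    _ ≤ (b:ℝ) ^ ((m:ℝ) * c + 1) := by
        apply Real.rpow_le_rpow_of_exponent_le hbR.le
        linarith
    _ = (b:ℝ) ^ (((m:ℝ)+1) - (m:ℝ)*(α*(τ/2))) := by
        congr 1
        rw [hcdef]; ring
    _ ≤ K := hdiv

lemma lower_beta (b : ℕ) (hb : 1 < b) (α β : ℝ) (hα : 1 < α) (hβ : 1 < β)
    (γ1 γ2 : ℕ → ℝ) (hγ1 : ∀ j, 0 < γ1 j ∧ γ1 j ≤ 1) (hγ2 : ∀ j, 0 < γ2 j ∧ γ2 j ≤ 1)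
    (τ C : ℝ) (hτ : 0 ≤ τ) (hC : 0 ≤ C)
    (hA : ∀ ε : ℝ, 0 < ε → ε < 1 → ∀ s t : ℕ,
      (Ncount b α β γ1 γ2 ε s t : ℝ) ≤ C * ε ^ (-τ)) :
    1/β ≤ τ/2 := by
  by_contra hcon
  push_neg at hcon
  have hα0 : (0:ℝ) < α := by linarith
  have hβ0 : (0:ℝ) < β := by linarith
  have hcc : β * (τ/2) < 1 := by
    have h1 := mul_lt_mul_of_pos_left hcon hβ0
    rwa [mul_one_div_cancel hβ0.ne'] at h1
  set γ : ℝ := γ2 0 with hγdef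
  have hγ0 : 0 < γ := (hγ2 0).1
  have hγle : γ ≤ 1 := (hγ2 0).2
  set c : ℝ := 1 - β * (τ/2) with hcdef
  have hc : 0 < c := by simp only [hcdef]; linarith
  set K : ℝ := C * ((γ/2) ^ (-(τ/2))) with hK
  apply aux_rpow_unbounded K c hc
  intro n hn
  have hn0 : (0:ℝ) < n := by exact_mod_cast hn
  have hn1 : (1:ℝ) ≤ n := by exact_mod_cast hn
  set u : ℝ := γ * (n:ℝ) ^ (-β) / 2 with hu
  have hnm1 : (n:ℝ) ^ (-β) ≤ 1 :=
    Real.rpow_le_one_of_one_le_of_nonpos hn1 (by linarith)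
  have hnm0 : (0:ℝ) < (n:ℝ) ^ (-β) := Real.rpow_pos_of_pos hn0 _
  have hu0 : 0 < u := by rw [hu]; positivity
  have hu1 : u < 1 := by rw [hu]; nlinarith
  set ε : ℝ := Real.sqrt u with hεdef
  have hε0 : 0 < ε := Real.sqrt_pos.mpr hu0
  have hε2 : ε ^ 2 = u := Real.sq_sqrt hu0.le
  have hε1 : ε < 1 := by nlinarith [Real.sqrt_nonneg u]
  have hcount := hA ε hε0 hε1 0 1
  have hEfin := Eset_finite b hb α β hα0 hβ0 γ1 γ2 hγ1 hγ2 ε hε0 0 1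
  set g : ℤ → (Fin 0 → ℕ) × (Fin 1 → ℤ) :=
    (fun l => (fun i => i.elim0, fun _ => l)) with hg
  have hginj : Function.Injective g := by
    intro a a' hab
    exact congrFun (congrArg Prod.snd hab) 0
  have hsub : g '' (Set.Icc 1 (n:ℤ)) ⊆ Eset b α β γ1 γ2 ε 0 1 := by
    rintro _ ⟨l, hl, rfl⟩
    simp only [Set.mem_Icc] at hl
    obtain ⟨hl1, hln⟩ := hl
    have hl0 : l ≠ 0 := by omega
    have habs : |(l:ℝ)| = (l:ℝ) := abs_of_pos (by exact_mod_cast hl1)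
    have hlale : (l:ℝ) ≤ (n:ℝ) := by exact_mod_cast hln
    have hl1R : (1:ℝ) ≤ (l:ℝ) := by exact_mod_cast hl1
    have hrK_ge : γ * (n:ℝ) ^ (-β) ≤ rK β (γ2 0) l := by
      rw [rK, if_neg hl0, habs]
      have h2 : (n:ℝ) ^ (-β) ≤ (l:ℝ) ^ (-β) :=
        Real.rpow_le_rpow_of_nonpos (by linarith) hlale (by linarith)
      nlinarith
    have hmem2 : ε ^ 2 < rK β (γ2 0) l := by
      rw [hε2, hu]
      have hv0 : 0 < γ * (n:ℝ) ^ (-β) := by positivity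
      linarith
    show ε ^ 2 <
      (∏ j : Fin 0, rho b α (γ1 j) ((fun i => i.elim0 : Fin 0 → ℕ) j))
        * ∏ j : Fin 1, rK β (γ2 j) ((fun _ => l) j)
    have e1 : (∏ j : Fin 1, rK β (γ2 j) ((fun _ => l) j)) = rK β (γ2 0) l := by
      rw [Fin.prod_univ_one]
      norm_num
    have e2 : (∏ j : Fin 0, rho b α (γ1 j) ((fun i => i.elim0 : Fin 0 → ℕ) j)) = 1 := by
      simp
    rw [e1, e2, one_mul]
    exact hmem2
  have hcard_ge : (n:ℝ) ≤ (Ncount b α β γ1 γ2 ε 0 1 : ℝ) := by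
    have h1 : (g '' (Set.Icc 1 (n:ℤ))).ncard = n := by
      rw [Set.ncard_image_of_injective _ hginj, ← Finset.coe_Icc, Set.ncard_coe_finset,
        Int.card_Icc]
      simp
    have h2 := Set.ncard_le_ncard hsub hEfin
    rw [Ncount_eq]
    rw [h1] at h2
    exact_mod_cast h2
  have hεt : ε ^ (-τ) = (γ/2) ^ (-(τ/2)) * (n:ℝ) ^ (β*(τ/2)) := by
    have h1 : ε ^ (-τ) = (ε^2) ^ (-(τ/2)) := by
      rw [sq_rpow ε (-(τ/2)) hε0.le]
      congr 1; ring
    rw [h1, hε2, hu, show γ * (n:ℝ) ^ (-β) / 2 = (γ/2) * (n:ℝ) ^ (-β) by ring,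
      Real.mul_rpow (by positivity) (by positivity)]
    congr 1
    rw [← Real.rpow_mul hn0.le]
    congr 1; ring
  have hnp2 : (0:ℝ) < (n:ℝ) ^ (β*(τ/2)) := Real.rpow_pos_of_pos hn0 _
  have hmain : (n:ℝ) ^ (1:ℝ) ≤ K * (n:ℝ) ^ (β*(τ/2)) := by
    rw [Real.rpow_one]
    calc (n:ℝ) ≤ C * ε ^ (-τ) := le_trans hcard_ge hcount
      _ = K * (n:ℝ) ^ (β*(τ/2)) := by rw [hεt, hK]; ring
  have hdiv : (n:ℝ) ^ ((1:ℝ) - β*(τ/2)) ≤ K := by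
    rw [Real.rpow_sub hn0, div_le_iff₀ hnp2]
    exact hmain
  calc (n:ℝ) ^ c = (n:ℝ) ^ ((1:ℝ) - β*(τ/2)) := by rw [hcdef]
    _ ≤ K := hdiv

lemma lower_sum (b : ℕ) (hb : 1 < b) (α β : ℝ) (hα : 1 < α) (hβ : 1 < β)
    (γ1 γ2 : ℕ → ℝ) (hγ1 : ∀ j, 0 < γ1 j ∧ γ1 j ≤ 1) (hγ2 : ∀ j, 0 < γ2 j ∧ γ2 j ≤ 1)
    (τ C : ℝ) (hτ : 0 ≤ τ) (hC : 0 ≤ C)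
    (hA : ∀ ε : ℝ, 0 < ε → ε < 1 → ∀ s t : ℕ,
      (Ncount b α β γ1 γ2 ε s t : ℝ) ≤ C * ε ^ (-τ)) :
    (sGamma γ1 γ2).toReal ≤ τ/2 := by
  by_contra hcon
  push_neg at hcon
  obtain ⟨p, hp1, hp2⟩ := exists_between hcon
  have hα0 : (0:ℝ) < α := by linarith
  have hβ0 : (0:ℝ) < β := by linarith
  have hp0 : 0 < p := lt_of_le_of_lt (by linarith) hp1
  -- the two counting estimates
  have hcount1 : ∀ (m s : ℕ),
      (((Finset.range s).filter (fun j => (2:ℝ) ^ (-((m:ℝ)+1)) < γ1 j)).card : ℝ)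
        ≤ C * (2:ℝ) ^ (((m:ℝ)+1) * (τ/2)) := by
    intro m s
    have hu0 : (0:ℝ) < (2:ℝ) ^ (-((m:ℝ)+1)) := Real.rpow_pos_of_pos two_pos _
    have hmn : (0:ℝ) ≤ (m:ℝ) := Nat.cast_nonneg m
    have hu1 : (2:ℝ) ^ (-((m:ℝ)+1)) < 1 :=
      Real.rpow_lt_one_of_one_lt_of_neg one_lt_two (by linarith)
    set ε : ℝ := Real.sqrt ((2:ℝ) ^ (-((m:ℝ)+1))) with hεdef
    have hε0 : 0 < ε := Real.sqrt_pos.mpr hu0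
    have hε2 : ε ^ 2 = (2:ℝ) ^ (-((m:ℝ)+1)) := Real.sq_sqrt hu0.le
    have hε1 : ε < 1 := by nlinarith [Real.sqrt_nonneg ((2:ℝ) ^ (-((m:ℝ)+1)))]
    have hN := hA ε hε0 hε1 s 0
    have hEfin := Eset_finite b hb α β hα0 hβ0 γ1 γ2 hγ1 hγ2 ε hε0 s 0
    set f : ℕ → (Fin s → ℕ) × (Fin 0 → ℤ) :=
      (fun j => (fun i => if (i:ℕ) = j then 1 else 0, fun i => i.elim0)) with hf
    have hmaps : ∀ j ∈ (Finset.range s).filter (fun j => (2:ℝ) ^ (-((m:ℝ)+1)) < γ1 j),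
        f j ∈ hEfin.toFinset := by
      intro j hj
      obtain ⟨hjr, hjγ⟩ := Finset.mem_filter.mp hj
      have hjs : j < s := Finset.mem_range.mp hjr
      rw [Set.Finite.mem_toFinset]
      show ε ^ 2 <
        (∏ i : Fin s, rho b α (γ1 i) (if ((i:ℕ) = j) then 1 else 0))
          * ∏ i : Fin 0, rK β (γ2 i) ((fun i => i.elim0 : Fin 0 → ℤ) i)
      have e2 : (∏ i : Fin 0, rK β (γ2 i) ((fun i => i.elim0 : Fin 0 → ℤ) i)) = 1 := by simp
      have e1 : (∏ i : Fin s, rho b α (γ1 i) (if ((i:ℕ) = j) then 1 else 0)) = γ1 j := by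
        rw [Finset.prod_eq_single (⟨j, hjs⟩ : Fin s)]
        · rw [if_pos rfl, rho_one hb]
        · intro i _ hi
          have hne : (i:ℕ) ≠ j := by
            intro hh
            exact hi (Fin.ext (by simpa using hh))
          rw [if_neg hne, rho_zero]
        · intro habs
          exact absurd (Finset.mem_univ _) habs
      rw [e1, e2, mul_one, hε2]
      exact hjγ
    have hinj : Set.InjOn f
        ((Finset.range s).filter (fun j => (2:ℝ) ^ (-((m:ℝ)+1)) < γ1 j)) := by
      intro a ha a' ha' hfa
      by_contra hne
      have has : a < s := by
        have := Finset.mem_range.mp (Finset.mem_of_mem_filter a (by exact_mod_cast ha))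
        exact this
      have h1 := congrFun (congrArg Prod.fst hfa) ⟨a, has⟩
      simp only [hf] at h1
      simp [hne] at h1
    have hcardle := Finset.card_le_card_of_injOn f hmaps hinj
    have hNeq : (Ncount b α β γ1 γ2 ε s 0 : ℝ) = (hEfin.toFinset.card : ℝ) := by
      rw [Ncount_eq, Set.ncard_eq_toFinset_card _ hEfin]
    have hεt : ε ^ (-τ) = (2:ℝ) ^ (((m:ℝ)+1) * (τ/2)) := by
      have h1 : ε ^ (-τ) = (ε^2) ^ (-(τ/2)) := by
        rw [sq_rpow ε (-(τ/2)) hε0.le]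
        congr 1; ring
      rw [h1, hε2, ← Real.rpow_mul (by norm_num : (0:ℝ) ≤ 2)]
      congr 1; ring
    calc (((Finset.range s).filter (fun j => (2:ℝ) ^ (-((m:ℝ)+1)) < γ1 j)).card : ℝ)
        ≤ (hEfin.toFinset.card : ℝ) := by exact_mod_cast hcardle
      _ = (Ncount b α β γ1 γ2 ε s 0 : ℝ) := hNeq.symm
      _ ≤ C * ε ^ (-τ) := hN
      _ = C * (2:ℝ) ^ (((m:ℝ)+1) * (τ/2)) := by rw [hεt]
  have hcount2 : ∀ (m t : ℕ),
      (((Finset.range t).filter (fun j => (2:ℝ) ^ (-((m:ℝ)+1)) < γ2 j)).card : ℝ)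
        ≤ C * (2:ℝ) ^ (((m:ℝ)+1) * (τ/2)) := by
    intro m t
    have hu0 : (0:ℝ) < (2:ℝ) ^ (-((m:ℝ)+1)) := Real.rpow_pos_of_pos two_pos _
    have hmn : (0:ℝ) ≤ (m:ℝ) := Nat.cast_nonneg m
    have hu1 : (2:ℝ) ^ (-((m:ℝ)+1)) < 1 :=
      Real.rpow_lt_one_of_one_lt_of_neg one_lt_two (by linarith)
    set ε : ℝ := Real.sqrt ((2:ℝ) ^ (-((m:ℝ)+1))) with hεdef
    have hε0 : 0 < ε := Real.sqrt_pos.mpr hu0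
    have hε2 : ε ^ 2 = (2:ℝ) ^ (-((m:ℝ)+1)) := Real.sq_sqrt hu0.le
    have hε1 : ε < 1 := by nlinarith [Real.sqrt_nonneg ((2:ℝ) ^ (-((m:ℝ)+1)))]
    have hN := hA ε hε0 hε1 0 t
    have hEfin := Eset_finite b hb α β hα0 hβ0 γ1 γ2 hγ1 hγ2 ε hε0 0 t
    set f : ℕ → (Fin 0 → ℕ) × (Fin t → ℤ) :=
      (fun j => (fun i => i.elim0, fun i => if (i:ℕ) = j then 1 else 0)) with hf
    have hmaps : ∀ j ∈ (Finset.range t).filter (fun j => (2:ℝ) ^ (-((m:ℝ)+1)) < γ2 j),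
        f j ∈ hEfin.toFinset := by
      intro j hj
      obtain ⟨hjr, hjγ⟩ := Finset.mem_filter.mp hj
      have hjs : j < t := Finset.mem_range.mp hjr
      rw [Set.Finite.mem_toFinset]
      show ε ^ 2 <
        (∏ i : Fin 0, rho b α (γ1 i) ((fun i => i.elim0 : Fin 0 → ℕ) i))
          * ∏ i : Fin t, rK β (γ2 i) (if ((i:ℕ) = j) then 1 else 0)
      have e2 : (∏ i : Fin 0, rho b α (γ1 i) ((fun i => i.elim0 : Fin 0 → ℕ) i)) = 1 := by simp
      have e1 : (∏ i : Fin t, rK β (γ2 i) (if ((i:ℕ) = j) then 1 else 0)) = γ2 j := by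
        rw [Finset.prod_eq_single (⟨j, hjs⟩ : Fin t)]
        · rw [if_pos rfl, rK_one]
        · intro i _ hi
          have hne : (i:ℕ) ≠ j := by
            intro hh
            exact hi (Fin.ext (by simpa using hh))
          rw [if_neg hne, rK_zero]
        · intro habs
          exact absurd (Finset.mem_univ _) habs
      rw [e1, e2, one_mul, hε2]
      exact hjγ
    have hinj : Set.InjOn f
        ((Finset.range t).filter (fun j => (2:ℝ) ^ (-((m:ℝ)+1)) < γ2 j)) := by
      intro a ha a' ha' hfa
      by_contra hne
      have has : a < t := by
        have := Finset.mem_range.mp (Finset.mem_of_mem_filter a (by exact_mod_cast ha))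
        exact this
      have h1 := congrFun (congrArg Prod.snd hfa) ⟨a, has⟩
      simp only [hf] at h1
      simp [hne] at h1
    have hcardle := Finset.card_le_card_of_injOn f hmaps hinj
    have hNeq : (Ncount b α β γ1 γ2 ε 0 t : ℝ) = (hEfin.toFinset.card : ℝ) := by
      rw [Ncount_eq, Set.ncard_eq_toFinset_card _ hEfin]
    have hεt : ε ^ (-τ) = (2:ℝ) ^ (((m:ℝ)+1) * (τ/2)) := by
      have h1 : ε ^ (-τ) = (ε^2) ^ (-(τ/2)) := by
        rw [sq_rpow ε (-(τ/2)) hε0.le]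
        congr 1; ring
      rw [h1, hε2, ← Real.rpow_mul (by norm_num : (0:ℝ) ≤ 2)]
      congr 1; ring
    calc (((Finset.range t).filter (fun j => (2:ℝ) ^ (-((m:ℝ)+1)) < γ2 j)).card : ℝ)
        ≤ (hEfin.toFinset.card : ℝ) := by exact_mod_cast hcardle
      _ = (Ncount b α β γ1 γ2 ε 0 t : ℝ) := hNeq.symm
      _ ≤ C * ε ^ (-τ) := hN
      _ = C * (2:ℝ) ^ (((m:ℝ)+1) * (τ/2)) := by rw [hεt]
  have hsum1 : Summable (fun j => γ1 j ^ p) :=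
    band_generic τ C p hτ hC hp1 γ1 hγ1 hcount1
  have hsum2 : Summable (fun j => γ2 j ^ p) :=
    band_generic τ C p hτ hC hp1 γ2 hγ2 hcount2
  have hmemS : ENNReal.ofReal p ∈ {x : ENNReal | ∃ κ : ℝ, 0 < κ ∧ x = ENNReal.ofReal κ ∧
      Summable (fun j => γ1 j ^ κ) ∧ Summable (fun j => γ2 j ^ κ)} :=
    ⟨p, hp0, rfl, hsum1, hsum2⟩
  have hle : sGamma γ1 γ2 ≤ ENNReal.ofReal p := sInf_le hmemS
  have h2 := ENNReal.toReal_mono ENNReal.ofReal_ne_top hle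
  rw [ENNReal.toReal_ofReal hp0.le] at h2
  linarith

theorem stmt_10 (b : ℕ) (hb : b.Prime) (α β : ℝ) (hα : 1 < α) (hβ : 1 < β)
    (γ1 γ2 : ℕ → ℝ) (hγ1 : ∀ j, 0 < γ1 j ∧ γ1 j ≤ 1) (hγ2 : ∀ j, 0 < γ2 j ∧ γ2 j ≤ 1)
    (hfin : sGamma γ1 γ2 < ⊤) :
    sInf {τ : ℝ | 0 ≤ τ ∧ ∃ C : ℝ, 0 ≤ C ∧ ∀ ε : ℝ, 0 < ε → ε < 1 → ∀ s t : ℕ,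
        (Ncount b α β γ1 γ2 ε s t : ℝ) ≤ C * ε ^ (-τ)} =
      2 * max ((sGamma γ1 γ2).toReal) (max (1 / α) (1 / β)) := by
  have hb1 : 1 < b := hb.one_lt
  have hα0 : (0:ℝ) < α := by linarith
  have hβ0 : (0:ℝ) < β := by linarith
  have hinvα : (0:ℝ) < 1/α := by positivity
  set X : ℝ := (sGamma γ1 γ2).toReal with hX
  set M : ℝ := max X (max (1/α) (1/β)) with hM
  have hM1 : 1/α ≤ M := le_trans (le_max_left _ _) (le_max_right _ _)
  have hMX : X ≤ M := le_max_left _ _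
  have hM0 : 0 < M := lt_of_lt_of_le hinvα hM1
  set A : Set ℝ := {τ : ℝ | 0 ≤ τ ∧ ∃ C : ℝ, 0 ≤ C ∧ ∀ ε : ℝ, 0 < ε → ε < 1 → ∀ s t : ℕ,
      (Ncount b α β γ1 γ2 ε s t : ℝ) ≤ C * ε ^ (-τ)} with hA
  have upper : ∀ τ : ℝ, 2*M < τ → τ ∈ A := by
    intro τ hτ
    have hp : M < τ/2 := by linarith
    have hp0 : 0 < τ/2 := by linarith
    have hαp : 1 < α * (τ/2) := by
      have h1 := mul_lt_mul_of_pos_left (lt_of_le_of_lt hM1 hp) hα0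
      rwa [mul_one_div_cancel hα0.ne'] at h1
    have hβp : 1 < β * (τ/2) := by
      have hM2 : 1/β ≤ M := le_trans (le_max_right _ _) (le_max_right _ _)
      have h1 := mul_lt_mul_of_pos_left (lt_of_le_of_lt hM2 hp) hβ0
      rwa [mul_one_div_cancel hβ0.ne'] at h1
    -- summability at exponent τ/2
    have hlt : sGamma γ1 γ2 < ENNReal.ofReal (τ/2) :=
      (ENNReal.lt_ofReal_iff_toReal_lt hfin.ne).mpr (lt_of_le_of_lt hMX hp)
    rw [sGamma, sInf_lt_iff] at hlt
    obtain ⟨x, hx, hxlt⟩ := hlt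
    obtain ⟨κ, hκ0, rfl, hs1, hs2⟩ := hx
    have hκle : κ ≤ τ/2 := ((ENNReal.ofReal_lt_ofReal_iff hp0).mp hxlt).le
    have hsum1 : Summable (fun j => γ1 j ^ (τ/2)) := by
      apply Summable.of_nonneg_of_le (fun j => Real.rpow_nonneg (hγ1 j).1.le _)
        (fun j => Real.rpow_le_rpow_of_exponent_ge (hγ1 j).1 (hγ1 j).2 hκle) hs1
    have hsum2 : Summable (fun j => γ2 j ^ (τ/2)) := by
      apply Summable.of_nonneg_of_le (fun j => Real.rpow_nonneg (hγ2 j).1.le _)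
        (fun j => Real.rpow_le_rpow_of_exponent_ge (hγ2 j).1 (hγ2 j).2 hκle) hs2
    have hbound := Ncount_upper b hb1 α β hα hβ γ1 γ2 hγ1 hγ2 (τ/2) hp0 hαp hβp hsum1 hsum2
    refine ⟨by linarith, Real.exp (A0 b α (τ/2) * ∑' j, γ1 j ^ (τ/2))
        * Real.exp (B0 β (τ/2) * ∑' j, γ2 j ^ (τ/2)), by positivity, ?_⟩
    intro ε hε0 hε1 s t
    have := hbound ε hε0 hε1 s t
    rwa [show -(2*(τ/2)) = -τ by ring] at this
  have lower : ∀ τ ∈ A, 2*M ≤ τ := by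
    intro τ hτmem
    obtain ⟨hτ0, C, hC, hAc⟩ := hτmem
    have h1 := lower_alpha b hb1 α β hα hβ γ1 γ2 hγ1 hγ2 τ C hτ0 hC hAc
    have h2 := lower_beta b hb1 α β hα hβ γ1 γ2 hγ1 hγ2 τ C hτ0 hC hAc
    have h3 := lower_sum b hb1 α β hα hβ γ1 γ2 hγ1 hγ2 τ C hτ0 hC hAc
    have : M ≤ τ/2 := by
      rw [hM]
      exact max_le h3 (max_le h1 h2)
    linarith
  have hne : A.Nonempty := ⟨2*M + 1, upper _ (by linarith)⟩
  have hbdd : BddBelow A := ⟨2*M, lower⟩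
  have : sInf A = 2*M := by
    apply le_antisymm
    · apply le_of_forall_pos_le_add
      intro δ hδ
      exact le_trans (csInf_le hbdd (upper (2*M + δ) (by linarith))) (by linarith)
    · exact le_csInf hne lower
  exact this
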